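/- arXiv:2210.03634 — 4 statements merged into one kernel-verified Lean document; each statement's English description precedes it below -/
import Mathlib

section
/- Let Y and Z be real random variables with finite fourth moments, and let N > 2 be an integer. Then the inequality m_{2,2}[Y+Z, Y−Z] + (1/(N−1))·Var[Y+Z]·Var[Y−Z] − ((N−2)/(N−1))·(Var[Y] − Var[Z])² ≤ m₄[Y] − ((N−3)/(N−1))·Var[Y]² holds if and only if Var[Z²] − 2·Cov[Y², Z²] + (2/(N−1))·(Var[Z]² − 2·Cov[Y,Z]²) ≤ 0. -/
open MeasureTheory Finset
open scoped ENNReal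

/-- Variance `Var[Y] = E[(Y - E[Y])²]`. -/
noncomputable def pVar {Ω : Type*} [MeasurableSpace Ω] (μ : Measure Ω) (Y : Ω → ℝ) : ℝ :=
  ∫ ω, (Y ω - ∫ ω', Y ω' ∂μ) ^ 2 ∂μ

/-- Covariance `Cov[Y,Z] = E[(Y - E[Y])(Z - E[Z])]`. -/
noncomputable def pCov {Ω : Type*} [MeasurableSpace Ω] (μ : Measure Ω) (Y Z : Ω → ℝ) : ℝ :=
  ∫ ω, (Y ω - ∫ ω', Y ω' ∂μ) * (Z ω - ∫ ω', Z ω' ∂μ) ∂μ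

/-- Fourth central moment `m₄[Y] = E[(Y - E[Y])⁴]`. -/
noncomputable def pM4 {Ω : Type*} [MeasurableSpace Ω] (μ : Measure Ω) (Y : Ω → ℝ) : ℝ :=
  ∫ ω, (Y ω - ∫ ω', Y ω' ∂μ) ^ 4 ∂μ

/-- Multivariate second moment `m_{2,2}[Y,Z] = E[(Y - E[Y])²(Z - E[Z])²]`. -/
noncomputable def pM22 {Ω : Type*} [MeasurableSpace Ω] (μ : Measure Ω) (Y Z : Ω → ℝ) : ℝ :=
  ∫ ω, (Y ω - ∫ ω', Y ω' ∂μ) ^ 2 * (Z ω - ∫ ω', Z ω' ∂μ) ^ 2 ∂μ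

/-- Equivalent reformulation of Assumption (b) of the paper (for centred `Y`, `Z`, as the
paper assumes all data centred without loss of generality). -/
theorem assumption_b_iff_reduced_inequality
    {Ω : Type*} [MeasurableSpace Ω] (μ : Measure Ω) [IsProbabilityMeasure μ]
    (Y Z : Ω → ℝ) (hY : MemLp Y 4 μ) (hZ : MemLp Z 4 μ)
    (hY0 : ∫ ω, Y ω ∂μ = 0) (hZ0 : ∫ ω, Z ω ∂μ = 0)
    (N : ℕ) (hN : 2 < N) :
    (pM22 μ (fun ω => Y ω + Z ω) (fun ω => Y ω - Z ω)
        + (1 / ((N : ℝ) - 1)) * pVar μ (fun ω => Y ω + Z ω) * pVar μ (fun ω => Y ω - Z ω)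
        - (((N : ℝ) - 2) / ((N : ℝ) - 1)) * (pVar μ Y - pVar μ Z) ^ 2
      ≤ pM4 μ Y - (((N : ℝ) - 3) / ((N : ℝ) - 1)) * (pVar μ Y) ^ 2)
    ↔
    (pVar μ (fun ω => Z ω ^ 2) - 2 * pCov μ (fun ω => Y ω ^ 2) (fun ω => Z ω ^ 2)
        + (2 / ((N : ℝ) - 1)) * ((pVar μ Z) ^ 2 - 2 * (pCov μ Y Z) ^ 2) ≤ 0) := by
  -- L² membership of products of two L⁴ functions
  have hL2mul : ∀ f g : Ω → ℝ, MemLp f 4 μ → MemLp g 4 μ →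
      MemLp (fun ω => f ω * g ω) 2 μ := by
    intro f g hf hg
    have h24 : (1:ℝ≥0∞) / 2 = 1 / 4 + 1 / 4 := by
      simp only [one_div]
      rw [show ((4:ℝ≥0∞)) = 2 * 2 by norm_num, ENNReal.mul_inv (by norm_num) (by norm_num),
        ← two_mul, ← mul_assoc, ENNReal.mul_inv_cancel (by norm_num) (by norm_num), one_mul]
    have := hg.smul (r := 2) hf (hpqr := ⟨by simpa only [one_div] using h24.symm⟩)
    exact this
  -- integrability of products of two L² functions
  have hmul : ∀ f g : Ω → ℝ, MemLp f 2 μ → MemLp g 2 μ →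
      Integrable (fun ω => f ω * g ω) μ := by
    intro f g hf hg
    have h12 : (1:ℝ≥0∞) / 1 = 1 / 2 + 1 / 2 := by
      simp only [one_div]
      rw [ENNReal.inv_two_add_inv_two, inv_one]
    have := (hg.smul (r := 1) hf (hpqr := ⟨by simpa only [one_div] using h12.symm⟩)).integrable le_rfl
    exact this
  have hY2 : MemLp Y 2 μ := hY.mono_exponent (by norm_num)
  have hZ2 : MemLp Z 2 μ := hZ.mono_exponent (by norm_num)
  have hYY : MemLp (fun ω => Y ω * Y ω) 2 μ := hL2mul Y Y hY hY
  have hZZ : MemLp (fun ω => Z ω * Z ω) 2 μ := hL2mul Z Z hZ hZ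
  have congrI : ∀ f g : Ω → ℝ, (∀ ω, f ω = g ω) → Integrable f μ → Integrable g μ := by
    intro f g h hf; rwa [show f = g from funext h] at hf
  have iY2 : Integrable (fun ω => Y ω ^ 2) μ :=
    congrI _ _ (fun ω => by ring) (hmul Y Y hY2 hY2)
  have iZ2 : Integrable (fun ω => Z ω ^ 2) μ :=
    congrI _ _ (fun ω => by ring) (hmul Z Z hZ2 hZ2)
  have iYZ : Integrable (fun ω => Y ω * Z ω) μ := hmul Y Z hY2 hZ2
  have iY4 : Integrable (fun ω => Y ω ^ 4) μ :=
    congrI _ _ (fun ω => by ring) (hmul _ _ hYY hYY)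
  have iZ4 : Integrable (fun ω => Z ω ^ 4) μ :=
    congrI _ _ (fun ω => by ring) (hmul _ _ hZZ hZZ)
  have iY2Z2 : Integrable (fun ω => Y ω ^ 2 * Z ω ^ 2) μ :=
    congrI _ _ (fun ω => by ring) (hmul _ _ hYY hZZ)
  -- means of Y+Z and Y-Z
  have hP0 : ∫ ω, (Y ω + Z ω) ∂μ = 0 := by
    rw [integral_add (hY.integrable (by norm_num)) (hZ.integrable (by norm_num)), hY0, hZ0]
    ring
  have hM0 : ∫ ω, (Y ω - Z ω) ∂μ = 0 := by
    rw [integral_sub (hY.integrable (by norm_num)) (hZ.integrable (by norm_num)), hY0, hZ0]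
    ring
  -- abbreviations
  set a := ∫ ω, Y ω ^ 2 ∂μ with ha
  set b := ∫ ω, Z ω ^ 2 ∂μ with hb
  set c := ∫ ω, Y ω * Z ω ∂μ with hc
  set p4 := ∫ ω, Y ω ^ 4 ∂μ with hp4
  set q4 := ∫ ω, Z ω ^ 4 ∂μ with hq4
  set r22 := ∫ ω, Y ω ^ 2 * Z ω ^ 2 ∂μ with hr22
  -- evaluate all the moment quantities
  have eVarY : pVar μ Y = a := by simp only [pVar, hY0, sub_zero, ha]
  have eVarZ : pVar μ Z = b := by simp only [pVar, hZ0, sub_zero, hb]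
  have eM4 : pM4 μ Y = p4 := by simp only [pM4, hY0, sub_zero, hp4]
  have eCov : pCov μ Y Z = c := by simp only [pCov, hY0, hZ0, sub_zero, hc]
  have eVarP : pVar μ (fun ω => Y ω + Z ω) = a + b + 2 * c := by
    simp only [pVar, hP0, sub_zero]
    rw [show (fun ω => (Y ω + Z ω) ^ 2) = fun ω => Y ω ^ 2 + (Z ω ^ 2 + 2 * (Y ω * Z ω))
        from funext fun ω => by ring,
      integral_add iY2 (show Integrable (fun ω => Z ω ^ 2 + 2 * (Y ω * Z ω)) μ
        from iZ2.add (iYZ.const_mul 2)),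
      integral_add iZ2 (iYZ.const_mul 2), integral_const_mul]
    ring
  have eVarM : pVar μ (fun ω => Y ω - Z ω) = a + b - 2 * c := by
    simp only [pVar, hM0, sub_zero]
    rw [show (fun ω => (Y ω - Z ω) ^ 2) = fun ω => Y ω ^ 2 + (Z ω ^ 2 + (-2) * (Y ω * Z ω))
        from funext fun ω => by ring,
      integral_add iY2 (show Integrable (fun ω => Z ω ^ 2 + (-2) * (Y ω * Z ω)) μ
        from iZ2.add (iYZ.const_mul (-2))),
      integral_add iZ2 (iYZ.const_mul (-2)), integral_const_mul]
    ring
  have eM22 : pM22 μ (fun ω => Y ω + Z ω) (fun ω => Y ω - Z ω) = p4 - 2 * r22 + q4 := by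
    simp only [pM22, hP0, hM0, sub_zero]
    rw [show (fun ω => (Y ω + Z ω) ^ 2 * (Y ω - Z ω) ^ 2)
        = fun ω => Y ω ^ 4 + (Z ω ^ 4 + (-2) * (Y ω ^ 2 * Z ω ^ 2))
        from funext fun ω => by ring,
      integral_add iY4 (show Integrable (fun ω => Z ω ^ 4 + (-2) * (Y ω ^ 2 * Z ω ^ 2)) μ
        from iZ4.add (iY2Z2.const_mul (-2))),
      integral_add iZ4 (iY2Z2.const_mul (-2)), integral_const_mul]
    ring
  have eVarZ2 : pVar μ (fun ω => Z ω ^ 2) = q4 - b ^ 2 := by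
    simp only [pVar, ← hb]
    rw [show (fun ω => (Z ω ^ 2 - b) ^ 2)
        = fun ω => Z ω ^ 4 + ((-(2 * b)) * Z ω ^ 2 + b ^ 2)
        from funext fun ω => by ring,
      integral_add iZ4 (show Integrable (fun ω => -(2 * b) * Z ω ^ 2 + b ^ 2) μ
        from (iZ2.const_mul _).add (integrable_const _)),
      integral_add (iZ2.const_mul (-(2 * b))) (integrable_const _), integral_const_mul,
      integral_const]
    simp [measure_univ]
    ring
  have eCov22 : pCov μ (fun ω => Y ω ^ 2) (fun ω => Z ω ^ 2) = r22 - a * b := by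
    simp only [pCov, ← ha, ← hb]
    rw [show (fun ω => (Y ω ^ 2 - a) * (Z ω ^ 2 - b))
        = fun ω => Y ω ^ 2 * Z ω ^ 2 + ((-b) * Y ω ^ 2 + ((-a) * Z ω ^ 2 + a * b))
        from funext fun ω => by ring,
      integral_add iY2Z2
        (show Integrable (fun ω => -b * Y ω ^ 2 + (-a * Z ω ^ 2 + a * b)) μ
          from (iY2.const_mul _).add ((iZ2.const_mul _).add (integrable_const _))),
      integral_add (iY2.const_mul (-b))
        (show Integrable (fun ω => -a * Z ω ^ 2 + a * b) μ
          from (iZ2.const_mul _).add (integrable_const _)),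
      integral_add (iZ2.const_mul (-a)) (integrable_const _),
      integral_const_mul, integral_const_mul, integral_const]
    simp [measure_univ]
    ring
  rw [eVarY, eVarZ, eM4, eCov, eVarP, eVarM, eM22, eVarZ2, eCov22]
  have htN : (2:ℝ) < (N:ℝ) := by exact_mod_cast hN
  have ht : (0:ℝ) < (N:ℝ) - 1 := by linarith
  have key : (p4 - 2 * r22 + q4 + 1 / ((N:ℝ) - 1) * (a + b + 2 * c) * (a + b - 2 * c)
        - ((N:ℝ) - 2) / ((N:ℝ) - 1) * (a - b) ^ 2)
      - (p4 - ((N:ℝ) - 3) / ((N:ℝ) - 1) * a ^ 2)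
      = q4 - b ^ 2 - 2 * (r22 - a * b) + 2 / ((N:ℝ) - 1) * (b ^ 2 - 2 * c ^ 2) := by
    field_simp
    ring
  constructor <;> intro h <;> linarith
end

section
/- Let X be uniformly distributed on [−1, 1], let f(x) = sin(πx), and for β ∈ ℝ, β ≠ 0, let g(x) = βx. Then Var[g(X)²] − 2·Cov[f(X)², g(X)²] = β⁴·Var[X²] + β²/(2π²) > 0. Consequently, the inequality Var[g(X)²] − 2·Cov[f(X)², g(X)²] ≤ 0 fails for every nonzero linear surrogate g of f, so a Lasso surrogate does not in general satisfy the asymptotic form of the variance-accuracy condition (Assumption (b)). -/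
open MeasureTheory Finset

open Real in
lemma aux_hlin (x : ℝ) : HasDerivAt (fun x : ℝ => 2*π*x) (2*π) x := by
  simpa using (hasDerivAt_id x).const_mul (2*π)

open Real in
lemma aux_hdsin (x : ℝ) :
    HasDerivAt (fun x : ℝ => Real.sin (2*π*x)) (Real.cos (2*π*x) * (2*π)) x :=
  (Real.hasDerivAt_sin (2*π*x)).comp x (aux_hlin x)

open Real in
lemma aux_hdcos (x : ℝ) :
    HasDerivAt (fun x : ℝ => Real.cos (2*π*x)) (-Real.sin (2*π*x) * (2*π)) x :=
  (Real.hasDerivAt_cos (2*π*x)).comp x (aux_hlin x)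

open Real in
lemma aux_cos2 (x : ℝ) : Real.cos (2*π*x) = 1 - 2*Real.sin (π*x)^2 := by
  rw [show 2*π*x = 2*(π*x) by ring, Real.cos_two_mul]
  have := Real.sin_sq_add_cos_sq (π*x)
  linarith

open Real in
noncomputable def auxF (x : ℝ) : ℝ := x/2 - Real.sin (2*π*x)/(4*π)

open Real in
lemma aux_hdF (x : ℝ) : HasDerivAt auxF (Real.sin (π*x)^2) x := by
  have h := ((hasDerivAt_id x).div_const 2).sub ((aux_hdsin x).div_const (4*π))
  refine h.congr_deriv ?_
  rw [aux_cos2 x]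
  have hπ : π ≠ 0 := Real.pi_ne_zero
  field_simp
  ring

open Real in
noncomputable def auxG (x : ℝ) : ℝ :=
  -(1/2)*((x^2-1/3)*Real.sin (2*π*x)/(2*π) + x*Real.cos (2*π*x)/(2*π^2)
    - Real.sin (2*π*x)/(4*π^3))

open Real in
lemma aux_hdG (x : ℝ) : HasDerivAt auxG ((Real.sin (π*x)^2 - 1/2)*(x^2-1/3)) x := by
  have h1 := (((hasDerivAt_pow 2 x).sub_const (1/3)).mul (aux_hdsin x)).div_const (2*π)
  have h2 := ((hasDerivAt_id x).mul (aux_hdcos x)).div_const (2*π^2)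
  have h3 := (aux_hdsin x).div_const (4*π^3)
  have h := ((h1.add h2).sub h3).const_mul (-(1/2))
  refine h.congr_deriv ?_
  rw [aux_cos2 x]
  have hπ : π ≠ 0 := Real.pi_ne_zero
  push_cast [id]
  field_simp
  ring

open Real in
lemma aux_int_sinsq : ∫ x in (-1:ℝ)..1, Real.sin (π*x)^2 = 1 := by
  rw [intervalIntegral.integral_eq_sub_of_hasDerivAt (f := auxF) (fun x _ => aux_hdF x)
    (Continuous.intervalIntegrable (by fun_prop) _ _)]
  simp only [auxF]
  rw [show 2*π*(1:ℝ) = 2*π by ring, show 2*π*(-1:ℝ) = -(2*π) by ring]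
  rw [Real.sin_neg, Real.sin_two_pi]
  norm_num

open Real in
lemma aux_int_cov : ∫ x in (-1:ℝ)..1, (Real.sin (π*x)^2 - 1/2)*(x^2-1/3) = -1/(2*π^2) := by
  rw [intervalIntegral.integral_eq_sub_of_hasDerivAt (f := auxG) (fun x _ => aux_hdG x)
    (Continuous.intervalIntegrable (by fun_prop) _ _)]
  simp only [auxG]
  rw [show 2*π*(1:ℝ) = 2*π by ring, show 2*π*(-1:ℝ) = -(2*π) by ring]
  rw [Real.sin_neg, Real.cos_neg, Real.sin_two_pi, Real.cos_two_pi]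
  have hπ : π ≠ 0 := Real.pi_ne_zero
  field_simp
  ring

lemma aux_int_poly : ∫ x in (-1:ℝ)..1, (x^2-1/3)^2 = 8/45 := by
  rw [intervalIntegral.integral_eq_sub_of_hasDerivAt
    (f := fun x : ℝ => x^5/5 - 2*x^3/9 + x/9)
    (fun x _ => by
      have h := (((hasDerivAt_pow 5 x).div_const 5).sub
        (((hasDerivAt_pow 3 x).const_mul 2).div_const 9)).add ((hasDerivAt_id x).div_const 9)
      refine h.congr_deriv ?_
      push_cast; ring)
    (Continuous.intervalIntegrable (by fun_prop) _ _)]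
  norm_num

/-- For `X` uniform on `[-1,1]`, `f(x) = sin(πx)` and `g(x) = βx` with `β ≠ 0`:
`Var[g(X)²] - 2 Cov[f(X)², g(X)²] = β⁴ Var[X²] + β²/(2π²) > 0`, so the asymptotic form of
Assumption (b), `Var[g(X)²] - 2 Cov[f(X)², g(X)²] ≤ 0`, fails for every nonzero linear
surrogate. -/
theorem lasso_fails_assumption_b_counterexample
    {Ω : Type*} [MeasurableSpace Ω] (μ : Measure Ω) [IsProbabilityMeasure μ]
    (X : Ω → ℝ) (hX : Measurable X)
    (hunif : μ.map X =
      (volume (Set.Icc (-1 : ℝ) 1))⁻¹ • volume.restrict (Set.Icc (-1 : ℝ) 1))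
    (β : ℝ) (hβ : β ≠ 0) :
    pVar μ (fun ω => (β * X ω) ^ 2)
        - 2 * pCov μ (fun ω => Real.sin (Real.pi * X ω) ^ 2) (fun ω => (β * X ω) ^ 2)
      = β ^ 4 * pVar μ (fun ω => X ω ^ 2) + β ^ 2 / (2 * Real.pi ^ 2) ∧
    0 < β ^ 4 * pVar μ (fun ω => X ω ^ 2) + β ^ 2 / (2 * Real.pi ^ 2) ∧
    ¬ (pVar μ (fun ω => (β * X ω) ^ 2)
        - 2 * pCov μ (fun ω => Real.sin (Real.pi * X ω) ^ 2) (fun ω => (β * X ω) ^ 2)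
      ≤ 0) := by
  have hπ : Real.pi ≠ 0 := Real.pi_ne_zero
  have key : ∀ φ : ℝ → ℝ, Continuous φ →
      ∫ ω, φ (X ω) ∂μ = (∫ x in (-1:ℝ)..1, φ x) / 2 := by
    intro φ hφ
    rw [← integral_map hX.aemeasurable hφ.aestronglyMeasurable, hunif, integral_smul_measure]
    rw [Real.volume_Icc, ENNReal.toReal_inv, ENNReal.toReal_ofReal (by norm_num)]
    rw [MeasureTheory.integral_Icc_eq_integral_Ioc,
      ← intervalIntegral.integral_of_le (by norm_num : (-1:ℝ) ≤ 1)]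
    norm_num
    ring
  -- means
  have I2 : ∫ ω, (β * X ω)^2 ∂μ = β^2/3 := by
    have h := key (fun x => (β*x)^2) (by fun_prop)
    rw [h]
    simp only [mul_pow]
    rw [intervalIntegral.integral_const_mul, integral_pow]
    norm_num
    ring
  have I3 : ∫ ω, Real.sin (Real.pi * X ω)^2 ∂μ = 1/2 := by
    have h := key (fun x => Real.sin (Real.pi * x)^2) (by fun_prop)
    rw [h, aux_int_sinsq]
  have I1 : ∫ ω, X ω^2 ∂μ = 1/3 := by
    have h := key (fun x => x^2) (by fun_prop)
    rw [h, integral_pow]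
    norm_num
  -- variances
  have V1 : pVar μ (fun ω => X ω^2) = 4/45 := by
    simp only [pVar]
    rw [I1]
    have h := key (fun x => (x^2 - 1/3)^2) (by fun_prop)
    rw [h, aux_int_poly]
    norm_num
  have V2 : pVar μ (fun ω => (β * X ω)^2) = β^4 * (4/45) := by
    simp only [pVar]
    rw [I2]
    have h := key (fun x => ((β*x)^2 - β^2/3)^2) (by fun_prop)
    rw [h]
    have hcongr : ∀ x : ℝ, ((β*x)^2 - β^2/3)^2 = β^4 * (x^2 - 1/3)^2 := fun x => by ring
    simp only [hcongr]
    rw [intervalIntegral.integral_const_mul, aux_int_poly]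
    ring
  -- covariance
  have C1 : pCov μ (fun ω => Real.sin (Real.pi * X ω)^2) (fun ω => (β * X ω)^2)
      = -(β^2/(4*Real.pi^2)) := by
    simp only [pCov]
    rw [I2, I3]
    have h := key (fun x => (Real.sin (Real.pi * x)^2 - 1/2) * ((β*x)^2 - β^2/3))
      (by fun_prop)
    rw [h]
    have hcongr : ∀ x : ℝ, (Real.sin (Real.pi * x)^2 - 1/2) * ((β*x)^2 - β^2/3)
        = β^2 * ((Real.sin (Real.pi * x)^2 - 1/2) * (x^2 - 1/3)) := fun x => by ring
    simp only [hcongr]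
    rw [intervalIntegral.integral_const_mul, aux_int_cov]
    field_simp
    ring
  have hb2 : (0:ℝ) < β^2 := lt_of_le_of_ne (sq_nonneg β) (Ne.symm (pow_ne_zero 2 hβ))
  have hpi2 : (0:ℝ) < Real.pi^2 := by positivity
  have heq : pVar μ (fun ω => (β * X ω) ^ 2)
        - 2 * pCov μ (fun ω => Real.sin (Real.pi * X ω) ^ 2) (fun ω => (β * X ω) ^ 2)
      = β ^ 4 * pVar μ (fun ω => X ω ^ 2) + β ^ 2 / (2 * Real.pi ^ 2) := by
    rw [V1, V2, C1]
    field_simp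
    ring
  have hpos : 0 < β ^ 4 * pVar μ (fun ω => X ω ^ 2) + β ^ 2 / (2 * Real.pi ^ 2) := by
    rw [V1]
    have h1 : (0:ℝ) ≤ β^4 * (4/45) := by positivity
    have h2 : (0:ℝ) < β^2 / (2 * Real.pi^2) := div_pos hb2 (by positivity)
    linarith
  exact ⟨heq, hpos, by rw [heq]; linarith⟩
end

section
/- Let X₁,…,X_d be independent real random variables, each with mean zero, variance one, and finite fourth moment, let ε be a real random variable independent of (X₁,…,X_d) with mean zero and finite fourth moment, let α ∈ ℝ^d, and set f = α·X + ε and g = α·X. Then Var[g²] − 2·Cov[f², g²] = −Σ_{k=1}^d αₖ⁴·Var[Xₖ²] − 2·Σ_{k≠l} αₖ²α_l² ≤ 0, where the second sum runs over all ordered pairs (k,l) with k ≠ l. -/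
open MeasureTheory ProbabilityTheory Finset
open scoped ENNReal

section Helpers

variable {Ω : Type*} [MeasurableSpace Ω] {μ : Measure Ω}

lemma pVar_nonneg (Y : Ω → ℝ) : 0 ≤ pVar μ Y :=
  integral_nonneg fun _ => sq_nonneg _

lemma integrable_pow_of_memL4 [IsProbabilityMeasure μ] {f : Ω → ℝ}
    (hf : MemLp f 4 μ) {n : ℕ} (hn : n ≤ 4) :
    Integrable (fun ω => f ω ^ n) μ := by
  rcases Nat.eq_zero_or_pos n with rfl | hn1
  · simpa using integrable_const (1 : ℝ)
  · have h0 : MemLp f (n : ℝ≥0∞) μ :=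
      hf.mono_exponent (by exact_mod_cast hn)
    have h1 : Integrable (fun x => ‖f x‖ ^ ((n : ℝ≥0∞)).toReal) μ :=
      h0.integrable_norm_rpow (by exact_mod_cast hn1.ne') (by simp)
    have h2 : Integrable (fun x => |f x| ^ n) μ := by
      simpa [Real.norm_eq_abs, ENNReal.toReal_natCast, Real.rpow_natCast] using h1
    refine h2.mono' ((hf.aestronglyMeasurable.aemeasurable.pow_const n).aestronglyMeasurable) ?_
    filter_upwards with ω
    simp [abs_pow]

lemma pVar_eq [IsProbabilityMeasure μ] {Y : Ω → ℝ} (h1 : Integrable Y μ)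
    (h2 : Integrable (fun ω => Y ω ^ 2) μ) :
    pVar μ Y = (∫ ω, Y ω ^ 2 ∂μ) - (∫ ω, Y ω ∂μ) ^ 2 := by
  have hpt : ∀ ω, (Y ω - ∫ ω', Y ω' ∂μ) ^ 2
      = Y ω ^ 2 - (2 * ∫ ω', Y ω' ∂μ) * Y ω + (∫ ω', Y ω' ∂μ) ^ 2 := fun ω => by ring
  have hcm : Integrable (fun ω => (2 * ∫ ω', Y ω' ∂μ) * Y ω) μ :=
    h1.const_mul (2 * ∫ ω', Y ω' ∂μ)
  have hsub : Integrable (fun ω => Y ω ^ 2 - (2 * ∫ ω', Y ω' ∂μ) * Y ω) μ := by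
    exact h2.sub hcm
  simp only [pVar]
  simp only [hpt]
  rw [integral_add hsub (integrable_const _), integral_sub h2 hcm,
      integral_const_mul, integral_const]
  simp only [probReal_univ, one_smul]
  ring

lemma pCov_eq [IsProbabilityMeasure μ] {Y Z : Ω → ℝ} (hY : Integrable Y μ)
    (hZ : Integrable Z μ) (hYZ : Integrable (fun ω => Y ω * Z ω) μ) :
    pCov μ Y Z = (∫ ω, Y ω * Z ω ∂μ) - (∫ ω, Y ω ∂μ) * ∫ ω, Z ω ∂μ := by
  have hpt : ∀ ω, (Y ω - ∫ ω', Y ω' ∂μ) * (Z ω - ∫ ω', Z ω' ∂μ)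
      = Y ω * Z ω - ((∫ ω', Z ω' ∂μ) * Y ω + (∫ ω', Y ω' ∂μ) * Z ω)
        + (∫ ω', Y ω' ∂μ) * ∫ ω', Z ω' ∂μ := fun ω => by ring
  have hY' : Integrable (fun ω => (∫ ω', Z ω' ∂μ) * Y ω) μ := hY.const_mul _
  have hZ' : Integrable (fun ω => (∫ ω', Y ω' ∂μ) * Z ω) μ := hZ.const_mul _
  have hcm : Integrable (fun ω => (∫ ω', Z ω' ∂μ) * Y ω + (∫ ω', Y ω' ∂μ) * Z ω) μ := by
    exact hY'.add hZ'
  have hsub : Integrable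
      (fun ω => Y ω * Z ω - ((∫ ω', Z ω' ∂μ) * Y ω + (∫ ω', Y ω' ∂μ) * Z ω)) μ := by
    exact hYZ.sub hcm
  simp only [pCov]
  simp only [hpt]
  rw [integral_add hsub (integrable_const _), integral_sub hYZ hcm,
      integral_add hY' hZ', integral_const_mul, integral_const_mul, integral_const]
  simp only [probReal_univ, one_smul]
  ring

/-- First, second and fourth moments of a sum of independent, centered, `L⁴`
random variables. -/
lemma moments_sum {ι : Type*} [IsProbabilityMeasure μ] (Y : ι → Ω → ℝ)
    (hYmeas : ∀ k, Measurable (Y k))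
    (hYindep : iIndepFun Y μ)
    (hYmem : ∀ k, MemLp (Y k) 4 μ)
    (hY1 : ∀ k, ∫ ω, Y k ω ∂μ = 0) (s : Finset ι) :
    (∫ ω, (∑ k ∈ s, Y k) ω ∂μ = 0) ∧
    (∫ ω, ((∑ k ∈ s, Y k) ω) ^ 2 ∂μ = ∑ k ∈ s, ∫ ω, Y k ω ^ 2 ∂μ) ∧
    (∫ ω, ((∑ k ∈ s, Y k) ω) ^ 4 ∂μ
      = ∑ k ∈ s, ∫ ω, Y k ω ^ 4 ∂μ
        + 3 * ((∑ k ∈ s, ∫ ω, Y k ω ^ 2 ∂μ) ^ 2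
            - ∑ k ∈ s, (∫ ω, Y k ω ^ 2 ∂μ) ^ 2)) := by
  classical
  induction s using Finset.induction_on with
  | empty => simp
  | @insert j s hj ih =>
    have hTmem : MemLp (∑ k ∈ s, Y k) 4 μ := memLp_finset_sum' s fun k _ => hYmem k
    have hTmeas : Measurable (∑ k ∈ s, Y k) := by
      have h := Finset.measurable_sum s (fun k _ => hYmeas k)
      have he : (∑ k ∈ s, Y k) = fun a => ∑ k ∈ s, Y k a := funext fun a => by
        simp [Finset.sum_apply]
      rw [he]; exact h
    have hind : IndepFun (∑ k ∈ s, Y k) (Y j) μ :=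
      hYindep.indepFun_finsetSum_of_notMem hYmeas hj
    have hindp : ∀ a b : ℕ,
        IndepFun (fun ω => Y j ω ^ a) (fun ω => (∑ k ∈ s, Y k) ω ^ b) μ := fun a b =>
      hind.symm.comp (measurable_id.pow_const a) (measurable_id.pow_const b)
    have hTpow : ∀ n : ℕ, n ≤ 4 → Integrable (fun ω => (∑ k ∈ s, Y k) ω ^ n) μ :=
      fun n hn => integrable_pow_of_memL4 hTmem hn
    have hYjpow : ∀ n : ℕ, n ≤ 4 → Integrable (fun ω => Y j ω ^ n) μ :=
      fun n hn => integrable_pow_of_memL4 (hYmem j) hn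
    have hmulP : ∀ a b : ℕ, a ≤ 4 → b ≤ 4 →
        Integrable (fun ω => Y j ω ^ a * (∑ k ∈ s, Y k) ω ^ b) μ := fun a b ha hb => by
      exact (hindp a b).integrable_mul (hYjpow a ha) (hTpow b hb)
    have hEP : ∀ a b : ℕ, ∫ ω, Y j ω ^ a * (∑ k ∈ s, Y k) ω ^ b ∂μ
        = (∫ ω, Y j ω ^ a ∂μ) * ∫ ω, (∑ k ∈ s, Y k) ω ^ b ∂μ := fun a b =>
      (hindp a b).integral_fun_mul_eq_mul_integral ((hYmeas j).pow_const a).aestronglyMeasurable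
        (hTmeas.pow_const b).aestronglyMeasurable
    refine ⟨?_, ?_, ?_⟩
    · simp only [Finset.sum_insert hj, Pi.add_apply]
      rw [integral_add ((hYmem j).integrable (by norm_num)) (hTmem.integrable (by norm_num)),
        hY1 j, ih.1, add_zero]
    · simp only [Finset.sum_insert hj, Pi.add_apply]
      have hpt : ∀ ω, (Y j ω + (∑ k ∈ s, Y k) ω) ^ 2
          = Y j ω ^ 2 + (2 * (Y j ω ^ 1 * (∑ k ∈ s, Y k) ω ^ 1)
            + (∑ k ∈ s, Y k) ω ^ 2) := fun ω => by ring
      simp only [hpt]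
      have e1 : Integrable (fun ω => 2 * (Y j ω ^ 1 * (∑ k ∈ s, Y k) ω ^ 1)
          + (∑ k ∈ s, Y k) ω ^ 2) μ := by
        exact ((hmulP 1 1 (by norm_num) (by norm_num)).const_mul 2).add (hTpow 2 (by norm_num))
      rw [integral_add (hYjpow 2 (by norm_num)) e1,
          integral_add ((hmulP 1 1 (by norm_num) (by norm_num)).const_mul 2)
            (hTpow 2 (by norm_num)),
          integral_const_mul, hEP 1 1]
      simp only [pow_one]
      rw [hY1 j, ih.1, ih.2.1]
      ring
    · simp only [Finset.sum_insert hj, Pi.add_apply]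
      have hpt : ∀ ω, (Y j ω + (∑ k ∈ s, Y k) ω) ^ 4
          = Y j ω ^ 4 + (4 * (Y j ω ^ 3 * (∑ k ∈ s, Y k) ω ^ 1)
            + (6 * (Y j ω ^ 2 * (∑ k ∈ s, Y k) ω ^ 2)
              + (4 * (Y j ω ^ 1 * (∑ k ∈ s, Y k) ω ^ 3)
                + (∑ k ∈ s, Y k) ω ^ 4))) := fun ω => by ring
      simp only [hpt]
      have i2 : Integrable (fun ω => 4 * (Y j ω ^ 3 * (∑ k ∈ s, Y k) ω ^ 1)) μ :=
        (hmulP 3 1 (by norm_num) (by norm_num)).const_mul 4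
      have i3 : Integrable (fun ω => 6 * (Y j ω ^ 2 * (∑ k ∈ s, Y k) ω ^ 2)) μ :=
        (hmulP 2 2 (by norm_num) (by norm_num)).const_mul 6
      have i4 : Integrable (fun ω => 4 * (Y j ω ^ 1 * (∑ k ∈ s, Y k) ω ^ 3)) μ :=
        (hmulP 1 3 (by norm_num) (by norm_num)).const_mul 4
      have i5 : Integrable (fun ω => (∑ k ∈ s, Y k) ω ^ 4) μ := hTpow 4 (by norm_num)
      have e45 : Integrable (fun ω => 4 * (Y j ω ^ 1 * (∑ k ∈ s, Y k) ω ^ 3)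
          + (∑ k ∈ s, Y k) ω ^ 4) μ := by exact i4.add i5
      have e345 : Integrable (fun ω => 6 * (Y j ω ^ 2 * (∑ k ∈ s, Y k) ω ^ 2)
          + (4 * (Y j ω ^ 1 * (∑ k ∈ s, Y k) ω ^ 3)
            + (∑ k ∈ s, Y k) ω ^ 4)) μ := by exact i3.add e45
      have e2345 : Integrable (fun ω => 4 * (Y j ω ^ 3 * (∑ k ∈ s, Y k) ω ^ 1)
          + (6 * (Y j ω ^ 2 * (∑ k ∈ s, Y k) ω ^ 2)
            + (4 * (Y j ω ^ 1 * (∑ k ∈ s, Y k) ω ^ 3)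
              + (∑ k ∈ s, Y k) ω ^ 4))) μ := by exact i2.add e345
      rw [integral_add (hYjpow 4 (by norm_num)) e2345,
          integral_add i2 e345,
          integral_add i3 e45,
          integral_add i4 i5,
          integral_const_mul, integral_const_mul, integral_const_mul,
          hEP 3 1, hEP 2 2, hEP 1 3]
      simp only [pow_one]
      rw [hY1 j, ih.1, ih.2.1, ih.2.2]
      ring

lemma pair_sum_eq {d : ℕ} (b : Fin d → ℝ) :
    ∑ p ∈ Finset.univ.filter (fun p : Fin d × Fin d => p.1 ≠ p.2), b p.1 * b p.2
      = (∑ k, b k) ^ 2 - ∑ k, b k ^ 2 := by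
  classical
  have htot : ∑ p : Fin d × Fin d, b p.1 * b p.2 = (∑ k, b k) ^ 2 := by
    rw [sq, Fintype.sum_mul_sum, Fintype.sum_prod_type]
  have hdiag : ∑ p ∈ Finset.univ.filter
      (fun p : Fin d × Fin d => ¬ p.1 ≠ p.2), b p.1 * b p.2 = ∑ k, b k ^ 2 := by
    rw [Finset.sum_filter, Fintype.sum_prod_type]
    simp [Finset.sum_ite_eq, pow_two]
  have hsplit := Finset.sum_filter_add_sum_filter_not Finset.univ
    (fun p : Fin d × Fin d => p.1 ≠ p.2) (fun p => b p.1 * b p.2)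
  rw [hdiag, htot] at hsplit
  linarith

end Helpers

/-- For the noisy linear model `f = α·X + ε` and the limiting surrogate `g = α·X`:
`Var[g²] - 2 Cov[f², g²] = -Σₖ αₖ⁴ Var[Xₖ²] - 2 Σ_{k≠l} αₖ²αₗ² ≤ 0`
(second sum over ordered pairs `k ≠ l`). -/
theorem noisy_linear_satisfies_asymptotic_assumption_b
    {Ω : Type*} [MeasurableSpace Ω] (μ : Measure Ω) [IsProbabilityMeasure μ]
    {d : ℕ} (X : Fin d → Ω → ℝ)
    (hmeas : ∀ k, Measurable (X k))
    (hindep : iIndepFun X μ)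
    (hmean : ∀ k, ∫ ω, X k ω ∂μ = 0)
    (hvar : ∀ k, pVar μ (X k) = 1)
    (h4 : ∀ k, MemLp (X k) 4 μ)
    (ε : Ω → ℝ) (hεmeas : Measurable ε)
    (hεindep : IndepFun (fun ω k => X k ω) ε μ)
    (hεmean : ∫ ω, ε ω ∂μ = 0)
    (hε4 : MemLp ε 4 μ)
    (α : Fin d → ℝ) :
    pVar μ (fun ω => (∑ k, α k * X k ω) ^ 2)
        - 2 * pCov μ (fun ω => (∑ k, α k * X k ω + ε ω) ^ 2)
            (fun ω => (∑ k, α k * X k ω) ^ 2)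
      = - ∑ k, α k ^ 4 * pVar μ (fun ω => X k ω ^ 2)
        - 2 * ∑ p ∈ Finset.univ.filter (fun p : Fin d × Fin d => p.1 ≠ p.2),
            α p.1 ^ 2 * α p.2 ^ 2 ∧
    pVar μ (fun ω => (∑ k, α k * X k ω) ^ 2)
        - 2 * pCov μ (fun ω => (∑ k, α k * X k ω + ε ω) ^ 2)
            (fun ω => (∑ k, α k * X k ω) ^ 2) ≤ 0 := by
  classical
  -- second moment of each `X k`
  have hX2 : ∀ k, ∫ ω, X k ω ^ 2 ∂μ = 1 := by
    intro k
    have h := hvar k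
    simp only [pVar, hmean k, sub_zero] at h
    exact h
  -- moments of `g = α·X`
  have hYindep : iIndepFun (fun k ω => α k * X k ω) μ := by
    have h := hindep.comp (fun k => fun x : ℝ => α k * x)
      (fun k => measurable_id.const_mul (α k))
    exact h
  have hmom := moments_sum (μ := μ) (fun k ω => α k * X k ω)
    (fun k => (hmeas k).const_mul (α k)) hYindep
    (fun k => (h4 k).const_mul (α k))
    (fun k => by simp [integral_const_mul, hmean k]) Finset.univ
  simp only [Finset.sum_apply] at hmom
  have hY2 : ∀ k, ∫ ω, (α k * X k ω) ^ 2 ∂μ = α k ^ 2 := by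
    intro k
    simp only [mul_pow]
    rw [integral_const_mul, hX2 k, mul_one]
  have hY4 : ∀ k, ∫ ω, (α k * X k ω) ^ 4 ∂μ = α k ^ 4 * ∫ ω, X k ω ^ 4 ∂μ := by
    intro k
    simp only [mul_pow]
    rw [integral_const_mul]
  simp only [hY2, hY4] at hmom
  have hsq4 : (∑ k, (α k ^ 2) ^ 2) = ∑ k, α k ^ 4 :=
    Finset.sum_congr rfl fun k _ => by ring
  rw [hsq4] at hmom
  have hEG2 : ∫ ω, (∑ k, α k * X k ω) ^ 2 ∂μ = ∑ k, α k ^ 2 := hmom.2.1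
  have hEG4 : ∫ ω, (∑ k, α k * X k ω) ^ 4 ∂μ
      = (∑ k, α k ^ 4 * ∫ ω, X k ω ^ 4 ∂μ)
        + 3 * ((∑ k, α k ^ 2) ^ 2 - ∑ k, α k ^ 4) := hmom.2.2
  -- integrability of powers of `g` and `ε`
  have hGmem : MemLp (fun ω => ∑ k, α k * X k ω) 4 μ := by
    have h := memLp_finset_sum' (μ := μ) Finset.univ
      (f := fun k ω => α k * X k ω) (fun k _ => (h4 k).const_mul (α k))
    exact h.ae_eq (Filter.Eventually.of_forall fun ω => by simp [Finset.sum_apply])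
  have hGmeas : Measurable (fun ω => ∑ k, α k * X k ω) :=
    Finset.measurable_sum Finset.univ fun k _ => (hmeas k).const_mul (α k)
  have hGpow : ∀ n : ℕ, n ≤ 4 → Integrable (fun ω => (∑ k, α k * X k ω) ^ n) μ :=
    fun n hn => integrable_pow_of_memL4 hGmem hn
  have hεpow : ∀ n : ℕ, n ≤ 4 → Integrable (fun ω => ε ω ^ n) μ :=
    fun n hn => integrable_pow_of_memL4 hε4 hn
  -- independence of powers of `g` and `ε`
  have hGpow_indep : ∀ n : ℕ, IndepFun (fun ω => (∑ k, α k * X k ω) ^ n) ε μ := by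
    intro n
    have hφ : Measurable (fun v : Fin d → ℝ => (∑ k, α k * v k) ^ n) :=
      (Finset.measurable_sum Finset.univ fun k _ =>
        (by fun_prop : Measurable fun v : Fin d → ℝ => α k * v k)).pow_const n
    exact hεindep.comp hφ measurable_id
  have hind_ab : ∀ a b : ℕ,
      IndepFun (fun ω => (∑ k, α k * X k ω) ^ a) (fun ω => ε ω ^ b) μ := fun a b =>
    (hGpow_indep a).comp measurable_id (measurable_id.pow_const b)
  have hmulGε : ∀ a b : ℕ, a ≤ 4 → b ≤ 4 →
      Integrable (fun ω => (∑ k, α k * X k ω) ^ a * ε ω ^ b) μ := fun a b ha hb => by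
    exact (hind_ab a b).integrable_mul (hGpow a ha) (hεpow b hb)
  have hEGε : ∀ a b : ℕ, ∫ ω, (∑ k, α k * X k ω) ^ a * ε ω ^ b ∂μ
      = (∫ ω, (∑ k, α k * X k ω) ^ a ∂μ) * ∫ ω, ε ω ^ b ∂μ := fun a b =>
    (hind_ab a b).integral_fun_mul_eq_mul_integral (hGmeas.pow_const a).aestronglyMeasurable
      (hεmeas.pow_const b).aestronglyMeasurable
  -- variance of g²
  have h1 : Integrable (fun ω => (∑ k, α k * X k ω) ^ 2) μ := hGpow 2 (by norm_num)
  have h2 : Integrable (fun ω => ((∑ k, α k * X k ω) ^ 2) ^ 2) μ :=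
    (hGpow 4 (by norm_num)).congr (Filter.Eventually.of_forall fun ω => by ring)
  have hVarG : pVar μ (fun ω => (∑ k, α k * X k ω) ^ 2)
      = (∫ ω, (∑ k, α k * X k ω) ^ 4 ∂μ) - (∫ ω, (∑ k, α k * X k ω) ^ 2 ∂μ) ^ 2 := by
    rw [pVar_eq h1 h2]
    congr 1
    exact integral_congr_ae (Filter.Eventually.of_forall fun ω => by ring)
  -- covariance of f² and g²
  have hYint : Integrable (fun ω => (∑ k, α k * X k ω + ε ω) ^ 2) μ := by
    have h : Integrable (fun ω => (∑ k, α k * X k ω) ^ 2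
        + (2 * ((∑ k, α k * X k ω) ^ 1 * ε ω ^ 1) + ε ω ^ 2)) μ := by
      exact (hGpow 2 (by norm_num)).add
        (((hmulGε 1 1 (by norm_num) (by norm_num)).const_mul 2).add (hεpow 2 (by norm_num)))
    exact h.congr (Filter.Eventually.of_forall fun ω => by ring)
  have hYZint : Integrable
      (fun ω => (∑ k, α k * X k ω + ε ω) ^ 2 * (∑ k, α k * X k ω) ^ 2) μ := by
    have h : Integrable (fun ω => (∑ k, α k * X k ω) ^ 4
        + (2 * ((∑ k, α k * X k ω) ^ 3 * ε ω ^ 1)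
          + (∑ k, α k * X k ω) ^ 2 * ε ω ^ 2)) μ := by
      exact (hGpow 4 (by norm_num)).add
        (((hmulGε 3 1 (by norm_num) (by norm_num)).const_mul 2).add
          (hmulGε 2 2 (by norm_num) (by norm_num)))
    exact h.congr (Filter.Eventually.of_forall fun ω => by ring)
  have hEY : ∫ ω, (∑ k, α k * X k ω + ε ω) ^ 2 ∂μ
      = (∫ ω, (∑ k, α k * X k ω) ^ 2 ∂μ) + ∫ ω, ε ω ^ 2 ∂μ := by
    have hpt : ∀ ω, (∑ k, α k * X k ω + ε ω) ^ 2
        = (∑ k, α k * X k ω) ^ 2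
          + (2 * ((∑ k, α k * X k ω) ^ 1 * ε ω ^ 1) + ε ω ^ 2) := fun ω => by ring
    simp only [hpt]
    have e1 : Integrable (fun ω => 2 * ((∑ k, α k * X k ω) ^ 1 * ε ω ^ 1) + ε ω ^ 2) μ := by
      exact ((hmulGε 1 1 (by norm_num) (by norm_num)).const_mul 2).add (hεpow 2 (by norm_num))
    rw [integral_add (hGpow 2 (by norm_num)) e1,
        integral_add ((hmulGε 1 1 (by norm_num) (by norm_num)).const_mul 2)
          (hεpow 2 (by norm_num)),
        integral_const_mul, hEGε 1 1]
    simp only [pow_one]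
    rw [hεmean]
    ring
  have hEYZ : ∫ ω, (∑ k, α k * X k ω + ε ω) ^ 2 * (∑ k, α k * X k ω) ^ 2 ∂μ
      = (∫ ω, (∑ k, α k * X k ω) ^ 4 ∂μ)
        + (∫ ω, (∑ k, α k * X k ω) ^ 2 ∂μ) * ∫ ω, ε ω ^ 2 ∂μ := by
    have hpt : ∀ ω, (∑ k, α k * X k ω + ε ω) ^ 2 * (∑ k, α k * X k ω) ^ 2
        = (∑ k, α k * X k ω) ^ 4
          + (2 * ((∑ k, α k * X k ω) ^ 3 * ε ω ^ 1)
            + (∑ k, α k * X k ω) ^ 2 * ε ω ^ 2) := fun ω => by ring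
    simp only [hpt]
    have e1 : Integrable (fun ω => 2 * ((∑ k, α k * X k ω) ^ 3 * ε ω ^ 1)
        + (∑ k, α k * X k ω) ^ 2 * ε ω ^ 2) μ := by
      exact ((hmulGε 3 1 (by norm_num) (by norm_num)).const_mul 2).add
        (hmulGε 2 2 (by norm_num) (by norm_num))
    rw [integral_add (hGpow 4 (by norm_num)) e1,
        integral_add ((hmulGε 3 1 (by norm_num) (by norm_num)).const_mul 2)
          (hmulGε 2 2 (by norm_num) (by norm_num)),
        integral_const_mul, hEGε 3 1, hEGε 2 2]
    simp only [pow_one]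
    rw [hεmean]
    ring
  have hCov : pCov μ (fun ω => (∑ k, α k * X k ω + ε ω) ^ 2)
      (fun ω => (∑ k, α k * X k ω) ^ 2)
      = (∫ ω, (∑ k, α k * X k ω) ^ 4 ∂μ) - (∫ ω, (∑ k, α k * X k ω) ^ 2 ∂μ) ^ 2 := by
    rw [pCov_eq hYint h1 hYZint, hEYZ, hEY]
    ring
  -- variance of each Xₖ²
  have hpVarX : ∀ k, pVar μ (fun ω => X k ω ^ 2) = (∫ ω, X k ω ^ 4 ∂μ) - 1 := by
    intro k
    have hk1 : Integrable (fun ω => X k ω ^ 2) μ :=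
      integrable_pow_of_memL4 (h4 k) (by norm_num)
    have hk2 : Integrable (fun ω => (X k ω ^ 2) ^ 2) μ :=
      (integrable_pow_of_memL4 (h4 k) (le_refl 4)).congr
        (Filter.Eventually.of_forall fun ω => by ring)
    rw [pVar_eq hk1 hk2]
    rw [show (∫ ω, (X k ω ^ 2) ^ 2 ∂μ) = ∫ ω, X k ω ^ 4 ∂μ from
      integral_congr_ae (Filter.Eventually.of_forall fun ω => by ring), hX2 k]
    norm_num
  -- reduce the pair sum
  have hpair : (∑ p ∈ Finset.univ.filter (fun p : Fin d × Fin d => p.1 ≠ p.2),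
      α p.1 ^ 2 * α p.2 ^ 2) = (∑ k, α k ^ 2) ^ 2 - ∑ k, α k ^ 4 := by
    calc (∑ p ∈ Finset.univ.filter (fun p : Fin d × Fin d => p.1 ≠ p.2),
        α p.1 ^ 2 * α p.2 ^ 2)
        = (∑ k, α k ^ 2) ^ 2 - ∑ k, (α k ^ 2) ^ 2 := pair_sum_eq (fun k => α k ^ 2)
      _ = (∑ k, α k ^ 2) ^ 2 - ∑ k, α k ^ 4 := by rw [hsq4]
  have hsumVar : (∑ k, α k ^ 4 * pVar μ (fun ω => X k ω ^ 2))
      = (∑ k, α k ^ 4 * ∫ ω, X k ω ^ 4 ∂μ) - ∑ k, α k ^ 4 := by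
    simp only [hpVarX]
    rw [← Finset.sum_sub_distrib]
    exact Finset.sum_congr rfl fun k _ => by ring
  have hEq : pVar μ (fun ω => (∑ k, α k * X k ω) ^ 2)
        - 2 * pCov μ (fun ω => (∑ k, α k * X k ω + ε ω) ^ 2)
            (fun ω => (∑ k, α k * X k ω) ^ 2)
      = - ∑ k, α k ^ 4 * pVar μ (fun ω => X k ω ^ 2)
        - 2 * ∑ p ∈ Finset.univ.filter (fun p : Fin d × Fin d => p.1 ≠ p.2),
            α p.1 ^ 2 * α p.2 ^ 2 := by
    rw [hVarG, hCov, hpair, hsumVar, hEG2, hEG4]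
    ring
  refine ⟨hEq, ?_⟩
  rw [hEq]
  have hA : 0 ≤ ∑ k, α k ^ 4 * pVar μ (fun ω => X k ω ^ 2) :=
    Finset.sum_nonneg fun k _ => mul_nonneg (by positivity) (pVar_nonneg _)
  have hB : (0:ℝ) ≤ ∑ p ∈ Finset.univ.filter (fun p : Fin d × Fin d => p.1 ≠ p.2),
      α p.1 ^ 2 * α p.2 ^ 2 :=
    Finset.sum_nonneg fun p _ => by positivity
  linarith
end

section
/- Let X be a d-dimensional random vector, f : ℝ^d → ℝ measurable with f(X) integrable, x₁,…,x_N i.i.d. copies of X and z₁,…,z_M i.i.d. copies of X, all mutually independent, and let S divide N, with folds as in the LMC algorithm. For each fold s, let g_s : ℝ^d → ℝ be a random surrogate that is a measurable function only of the training samples {xᵢ : i not in fold s} (hence independent of the samples in fold s and of z₁,…,z_M), and assume g_s(X) is integrable. Define for each s the two-level estimator (μ_s) = (1/M)Σ_{j=1}^M g_s(z_j) + (S/N)Σ_{i in fold s}(f(xᵢ) − g_s(xᵢ)), and the LMC mean estimator M_{N,M} = (1/S)Σ_{s=1}^S (μ_s). Then E[M_{N,M}] = E[f(X)], i.e., the LMC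 mean estimator is unbiased. -/
open MeasureTheory ProbabilityTheory Finset

/-- finite family of a.e.-measurable functions gives an a.e.-measurable pi-map -/
lemma aemeasurable_pi_of_aemeasurable {Ω β A : Type*} [MeasurableSpace Ω] [MeasurableSpace β]
    [Finite A] {μ : Measure Ω} (f : A → Ω → β) (h : ∀ a, AEMeasurable (f a) μ) :
    AEMeasurable (fun ω a => f a ω) μ := by
  haveI : Countable A := Countable.of_equiv _ (Equiv.refl A)
  refine ⟨fun ω a => (h a).mk _ ω, measurable_pi_lambda _ fun a => (h a).measurable_mk, ?_⟩
  filter_upwards [MeasureTheory.ae_all_iff.2 fun a => (h a).ae_eq_mk] with ω hω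
  funext a; exact hω a

/-- joint law of an injectively reindexed sub-family of an independent family is
the product of the marginals -/
lemma joint_law_pi {I A Ω β : Type*} [Fintype A] [MeasurableSpace Ω] [MeasurableSpace β]
    {μ : Measure Ω} [IsProbabilityMeasure μ]
    (ξ : I → Ω → β) (hindep : iIndepFun ξ μ)
    (hmeas : ∀ i, AEMeasurable (ξ i) μ)
    (ι : A → I) (hι : Function.Injective ι) :
    Measure.map (fun ω a => ξ (ι a) ω) μ = Measure.pi (fun a => Measure.map (ξ (ι a)) μ) := by
  classical
  haveI : ∀ a : A, IsProbabilityMeasure (Measure.map (ξ (ι a)) μ) :=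
    fun a => Measure.isProbabilityMeasure_map (hmeas (ι a))
  symm
  refine Measure.pi_eq fun s hs => ?_
  rw [Measure.map_apply_of_aemeasurable
      (aemeasurable_pi_of_aemeasurable _ fun a => hmeas (ι a))
      (MeasurableSet.univ_pi hs)]
  have hpre : (fun ω a => ξ (ι a) ω) ⁻¹' (Set.univ.pi s) = ⋂ a, ξ (ι a) ⁻¹' s a := by
    ext ω; simp [Set.mem_pi]
  rw [hpre]
  set T : I → Set Ω := fun i => ξ i ⁻¹' (⋂ a ∈ Finset.univ.filter (fun a => ι a = i), s a)
    with hT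
  have hfilter : ∀ a : A, Finset.univ.filter (fun b => ι b = ι a) = {a} := by
    intro a; ext b; simp [hι.eq_iff]
  have hTa : ∀ a : A, T (ι a) = ξ (ι a) ⁻¹' s a := by
    intro a; rw [hT]; simp [hfilter a]
  have hiInter : (⋂ a, ξ (ι a) ⁻¹' s a) = ⋂ i ∈ Finset.univ.image ι, T i := by
    rw [Finset.set_biInter_finset_image]
    simp [hTa]
  have := hindep.meas_biInter (S := Finset.univ.image ι) (s := T) ?_
  · rw [hiInter, this, Finset.prod_image (fun a _ b _ h => hι h)]
    refine Finset.prod_congr rfl fun a _ => ?_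
    rw [hTa, Measure.map_apply_of_aemeasurable (hmeas (ι a)) (hs a)]
  · intro i _
    exact ⟨_, MeasurableSet.biInter (Finset.countable_toSet _) (fun a _ => hs a), rfl⟩

/-- integral of a measurable function of an injectively reindexed sub-family of an i.i.d.
family equals the integral against the corresponding product measure -/
lemma integral_comp_reindex {I A Ω β : Type*} [Fintype A] [MeasurableSpace Ω] [MeasurableSpace β]
    {μ : Measure Ω} [IsProbabilityMeasure μ] {ν : Measure β}
    (ξ : I → Ω → β) (hindep : iIndepFun ξ μ)
    (hmeas : ∀ i, AEMeasurable (ξ i) μ) (hlaw : ∀ i, Measure.map (ξ i) μ = ν)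
    (ι : A → I) (hι : Function.Injective ι) (H : (A → β) → ℝ) (hH : Measurable H) :
    ∫ ω, H (fun a => ξ (ι a) ω) ∂μ = ∫ v, H v ∂(Measure.pi fun _ : A => ν) := by
  have hpi : Measure.pi (fun a => Measure.map (ξ (ι a)) μ) = Measure.pi (fun _ : A => ν) := by
    congr 1; funext a; exact hlaw (ι a)
  rw [← joint_law_pi ξ hindep hmeas ι hι] at hpi
  rw [← hpi, integral_map (aemeasurable_pi_of_aemeasurable _ fun a => hmeas (ι a))
    hH.aestronglyMeasurable]

/-- The LMC mean estimator with per-fold surrogates, each trained only on the samples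
outside its fold (hence independent of the fold samples and of the auxiliary samples),
is unbiased. Folds are indexed by `s : Fin S`, positions within a fold by `i : Fin K`,
so the total sample size is `N = S * K` and `S/N = 1/K`. -/
theorem lmc_mean_estimator_unbiased
    {Ω : Type*} [MeasurableSpace Ω] {μ : Measure Ω} [IsProbabilityMeasure μ]
    {d S K M : ℕ} (hS : 0 < S) (hK : 0 < K) (hM : 0 < M)
    (X : Ω → Fin d → ℝ) (hX : Measurable X)
    (f : (Fin d → ℝ) → ℝ) (hf : Measurable f)
    (hfX : Integrable (fun ω => f (X ω)) μ)
    -- the samples x (fold s, position i) and z, i.i.d. copies of X, mutually independent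
    (ξ : ((Fin S × Fin K) ⊕ Fin M) → Ω → (Fin d → ℝ))
    (hindep : iIndepFun ξ μ)
    (hident : ∀ a, IdentDistrib (ξ a) X μ μ)
    (x : Fin S × Fin K → Ω → (Fin d → ℝ)) (z : Fin M → Ω → (Fin d → ℝ))
    (hx : ∀ p, x p = ξ (Sum.inl p)) (hz : ∀ j, z j = ξ (Sum.inr j))
    -- for each fold s, a surrogate G s which is a measurable function of the training
    -- samples (the samples in the other folds) and of the evaluation point
    (G : (s : Fin S) → ({t : Fin S // t ≠ s} × Fin K → (Fin d → ℝ)) → (Fin d → ℝ) → ℝ)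
    (hG : ∀ s, Measurable (Function.uncurry (G s)))
    (train : (s : Fin S) → Ω → ({t : Fin S // t ≠ s} × Fin K → (Fin d → ℝ)))
    (htrain : ∀ s ω p, train s ω p = x (p.1.1, p.2) ω)
    -- integrability of the surrogates evaluated at the independent sample points
    (hGz : ∀ s j, Integrable (fun ω => G s (train s ω) (z j ω)) μ)
    (hGx : ∀ s i, Integrable (fun ω => G s (train s ω) (x (s, i) ω)) μ)
    (hfx : ∀ p, Integrable (fun ω => f (x p ω)) μ)
    -- the per-fold two-level estimators and the LMC estimator
    (foldEst : Fin S → Ω → ℝ)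
    (hfold : ∀ s ω, foldEst s ω =
      (1 / (M : ℝ)) * ∑ j, G s (train s ω) (z j ω) +
      (1 / (K : ℝ)) * ∑ i, (f (x (s, i) ω) - G s (train s ω) (x (s, i) ω)))
    (lmcEst : Ω → ℝ)
    (hlmc : ∀ ω, lmcEst ω = (1 / (S : ℝ)) * ∑ s, foldEst s ω) :
    ∫ ω, lmcEst ω ∂μ = ∫ ω, f (X ω) ∂μ := by
  classical
  have hmeas : ∀ a, AEMeasurable (ξ a) μ := fun a => (hident a).aemeasurable_fst
  have hlaw : ∀ a, Measure.map (ξ a) μ = Measure.map X μ := fun a => (hident a).map_eq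
  -- ∫ f(x p) = ∫ f(X)
  have hfx_eq : ∀ p, ∫ ω, f (x p ω) ∂μ = ∫ ω, f (X ω) ∂μ := by
    intro p
    rw [hx]
    exact ((hident (Sum.inl p)).comp hf).integral_eq
  -- per fold analysis
  have hfold_eq : ∀ s, ∫ ω, foldEst s ω ∂μ = ∫ ω, f (X ω) ∂μ := by
    intro s
    set A := ({t : Fin S // t ≠ s} × Fin K) ⊕ Unit with hA
    set H : (A → (Fin d → ℝ)) → ℝ :=
      fun v => G s (fun p => v (Sum.inl p)) (v (Sum.inr ())) with hH
    have hHmeas : Measurable H := by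
      have : H = fun v => Function.uncurry (G s)
          ((fun p => v (Sum.inl p)), v (Sum.inr ())) := rfl
      rw [this]
      exact (hG s).comp ((measurable_pi_lambda _ fun p =>
        measurable_pi_apply _).prodMk (measurable_pi_apply _))
    set c : ℝ := ∫ v, H v ∂(Measure.pi fun _ : A => Measure.map X μ) with hc
    -- the integrals of the surrogate terms all equal c
    have hGz_eq : ∀ j, ∫ ω, G s (train s ω) (z j ω) ∂μ = c := by
      intro j
      set ι : A → (Fin S × Fin K) ⊕ Fin M :=
        Sum.elim (fun p => Sum.inl (p.1.1, p.2)) (fun _ => Sum.inr j) with hι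
      have hinj : Function.Injective ι := by
        rintro (p | u) (q | v) h
        · simp only [hι, Sum.elim_inl, Sum.inl.injEq, Prod.mk.injEq] at h
          exact congrArg Sum.inl (Prod.ext (Subtype.ext h.1) h.2)
        · exact absurd h (by simp [hι])
        · exact absurd h (by simp [hι])
        · cases u; cases v; rfl
      have key := integral_comp_reindex ξ hindep hmeas hlaw ι hinj H hHmeas
      rw [← hc] at key
      rw [← key]
      refine integral_congr_ae (Filter.Eventually.of_forall fun ω => ?_)
      simp only [hH, hι, Sum.elim_inl, Sum.elim_inr]
      congr 1
      · funext p; rw [htrain, hx]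
      · rw [hz]
    have hGx_eq : ∀ i, ∫ ω, G s (train s ω) (x (s, i) ω) ∂μ = c := by
      intro i
      set ι : A → (Fin S × Fin K) ⊕ Fin M :=
        Sum.elim (fun p => Sum.inl (p.1.1, p.2)) (fun _ => Sum.inl (s, i)) with hι
      have hinj : Function.Injective ι := by
        rintro (p | u) (q | v) h
        · simp only [hι, Sum.elim_inl, Sum.inl.injEq, Prod.mk.injEq] at h
          exact congrArg Sum.inl (Prod.ext (Subtype.ext h.1) h.2)
        · simp only [hι, Sum.elim_inl, Sum.elim_inr, Sum.inl.injEq, Prod.mk.injEq] at h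
          exact absurd h.1 p.1.2
        · simp only [hι, Sum.elim_inl, Sum.elim_inr, Sum.inl.injEq, Prod.mk.injEq] at h
          exact absurd h.1.symm q.1.2
        · cases u; cases v; rfl
      have key := integral_comp_reindex ξ hindep hmeas hlaw ι hinj H hHmeas
      rw [← hc] at key
      rw [← key]
      refine integral_congr_ae (Filter.Eventually.of_forall fun ω => ?_)
      simp only [hH, hι, Sum.elim_inl, Sum.elim_inr]
      congr 1
      · funext p; rw [htrain, hx]
      · rw [hx]
    -- compute the integral of the fold estimator
    have hrw : (fun ω => foldEst s ω) = fun ω =>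
        (1 / (M : ℝ)) * ∑ j, G s (train s ω) (z j ω) +
        (1 / (K : ℝ)) * ∑ i, (f (x (s, i) ω) - G s (train s ω) (x (s, i) ω)) :=
      funext (hfold s)
    have hint1 : Integrable (fun ω => (1 / (M : ℝ)) * ∑ j, G s (train s ω) (z j ω)) μ :=
      (integrable_finset_sum _ fun j _ => hGz s j).const_mul _
    have hintsub : ∀ i : Fin K,
        Integrable (fun ω => f (x (s, i) ω) - G s (train s ω) (x (s, i) ω)) μ :=
      fun i => (hfx (s, i)).sub (hGx s i)
    have hint2 : Integrable (fun ω =>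
        (1 / (K : ℝ)) * ∑ i, (f (x (s, i) ω) - G s (train s ω) (x (s, i) ω))) μ :=
      (integrable_finset_sum _ fun i _ => hintsub i).const_mul _
    rw [hrw, integral_add hint1 hint2,
      integral_const_mul, integral_const_mul,
      integral_finset_sum _ (fun j _ => hGz s j),
      integral_finset_sum _ (fun i _ => hintsub i)]
    have h1 : ∀ j : Fin M, j ∈ Finset.univ →
        ∫ ω, G s (train s ω) (z j ω) ∂μ = c := fun j _ => hGz_eq j
    have h2 : ∀ i : Fin K, i ∈ Finset.univ →
        ∫ ω, (f (x (s, i) ω) - G s (train s ω) (x (s, i) ω)) ∂μ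
          = ∫ ω, f (X ω) ∂μ - c := fun i _ => by
      rw [integral_sub (hfx (s, i)) (hGx s i), hfx_eq (s, i), hGx_eq i]
    rw [Finset.sum_congr rfl h1, Finset.sum_congr rfl h2]
    simp only [Finset.sum_const, Finset.card_univ, Fintype.card_fin, nsmul_eq_mul]
    have hM' : (M : ℝ) ≠ 0 := Nat.cast_ne_zero.mpr hM.ne'
    have hK' : (K : ℝ) ≠ 0 := Nat.cast_ne_zero.mpr hK.ne'
    field_simp
    ring
  -- aggregate over folds
  have hfoldint : ∀ s, Integrable (foldEst s) μ := by
    intro s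
    have hrw : foldEst s = fun ω =>
        (1 / (M : ℝ)) * ∑ j, G s (train s ω) (z j ω) +
        (1 / (K : ℝ)) * ∑ i, (f (x (s, i) ω) - G s (train s ω) (x (s, i) ω)) :=
      funext (hfold s)
    rw [hrw]
    have hintsub : ∀ i : Fin K,
        Integrable (fun ω => f (x (s, i) ω) - G s (train s ω) (x (s, i) ω)) μ :=
      fun i => (hfx (s, i)).sub (hGx s i)
    exact (((integrable_finset_sum _ fun j _ => hGz s j).const_mul _).add
      (((integrable_finset_sum _ fun i _ => hintsub i).const_mul _)))
  have hrw : (fun ω => lmcEst ω) = fun ω => (1 / (S : ℝ)) * ∑ s, foldEst s ω :=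
    funext hlmc
  rw [hrw, integral_const_mul, integral_finset_sum _ (fun s _ => hfoldint s),
    Finset.sum_congr rfl (fun s _ => hfold_eq s)]
  simp only [Finset.sum_const, Finset.card_univ, Fintype.card_fin, nsmul_eq_mul]
  have hS' : (S : ℝ) ≠ 0 := Nat.cast_ne_zero.mpr hS.ne'
  field_simp
end
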